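/- arXiv:1503.04952 — 6 statements merged into one kernel-verified Lean document; each statement's English description precedes it below -/
import Mathlib

section
/- For every integer n ≥ 1, the polynomial z^{2n+1} + z² + z − 1 has exactly one root in the interval (0,1), and no root in (−1,0]. -/
theorem cycle_two_tails_jost_root (n : ℕ) (hn : 1 ≤ n) :
    (∃! x : ℝ, x ∈ Set.Ioo (0 : ℝ) 1 ∧ x ^ (2 * n + 1) + x ^ 2 + x - 1 = 0) ∧
    (∀ x ∈ Set.Ioc (-1 : ℝ) 0, x ^ (2 * n + 1) + x ^ 2 + x - 1 ≠ 0) := by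
  set f : ℝ → ℝ := fun x => x ^ (2 * n + 1) + x ^ 2 + x - 1 with hf
  constructor
  · -- existence via IVT
    have hcont : ContinuousOn f (Set.Icc (0 : ℝ) 1) := by
      apply Continuous.continuousOn; fun_prop
    have h0 : f 0 = -1 := by simp [hf]
    have h1 : f 1 = 2 := by norm_num [hf]
    have hsub := intermediate_value_Ioo (by norm_num : (0:ℝ) ≤ 1) hcont
    have hmem : (0 : ℝ) ∈ Set.Ioo (f 0) (f 1) := by
      rw [h0, h1]; norm_num
    obtain ⟨x, hx, hfx⟩ := hsub hmem
    refine ⟨x, ⟨hx, hfx⟩, ?_⟩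
    rintro y ⟨hy, hfy⟩
    by_contra hne
    simp only [hf] at hfx
    rcases lt_or_gt_of_ne hne with h | h
    · have hp : y ^ (2 * n + 1) < x ^ (2 * n + 1) :=
        pow_lt_pow_left₀ h hy.1.le (by omega)
      have hq : y ^ 2 < x ^ 2 := pow_lt_pow_left₀ h hy.1.le two_ne_zero
      linarith
    · have hp : x ^ (2 * n + 1) < y ^ (2 * n + 1) :=
        pow_lt_pow_left₀ h hx.1.le (by omega)
      have hq : x ^ 2 < y ^ 2 := pow_lt_pow_left₀ h hx.1.le two_ne_zero
      linarith
  · rintro x ⟨hx1, hx0⟩ hfx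
    have h1 : x ^ (2 * n + 1) ≤ 0 := by
      apply Odd.pow_nonpos _ hx0
      exact ⟨n, by ring⟩
    have h2 : x ^ 2 + x ≤ 0 := by nlinarith
    nlinarith
end

section
/- Let p, q ≥ 2 be integers. The quadratic Q(y) = (p-1)(q-1)y² − (p+q-1)y + 1 has two positive real roots y₋ ≤ y₊ given by y_± = (p+q-1 ± √((p-q)² + 2(p+q) − 3))/(2(p-1)(q-1)). Moreover y₊ < 1 if and only if p ≥ 3, q ≥ 3, and (p,q) ≠ (3,3); and y₋ < 1 always holds. -/
/-! With `a = (p-1)(q-1)` and `b = p+q-1`, the discriminant `b² - 4a` equals `(p-q)² + 2(p+q) - 3`,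
so `y±` are the roots of `Q(y) = a y² - b y + 1`. Since `a > 0`, the position of the roots relative
to `1` is read off from the sign of `Q(1) = (p-2)(q-2) - 1` and of `b / 2a - 1` (the vertex); the
vertex condition is automatic here because `2a - b = 2 Q(1) + b - 2` with `b ≥ 3`. -/

namespace QuadraticRoots

variable {a b : ℝ}

lemma eval_add_div_two_mul_eq_zero {s : ℝ} (ha : a ≠ 0) (hs : s ^ 2 = b ^ 2 - 4 * a) :
    a * ((b + s) / (2 * a)) ^ 2 - b * ((b + s) / (2 * a)) + 1 = 0 := by
  field_simp
  linear_combination hs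

lemma sqrt_discrim_lt (ha : 0 < a) (hb : 0 < b) : √(b ^ 2 - 4 * a) < b :=
  (Real.sqrt_lt' hb).2 (by linarith)

lemma add_sqrt_discrim_div_lt_one_iff (ha : 0 < a) :
    (b + √(b ^ 2 - 4 * a)) / (2 * a) < 1 ↔ 0 < a - b + 1 ∧ b < 2 * a := by
  rw [div_lt_one (by positivity), ← lt_sub_iff_add_lt']
  constructor
  · intro h
    have hb : b < 2 * a := by linarith [Real.sqrt_nonneg (b ^ 2 - 4 * a)]
    have hsq := (Real.sqrt_lt' (by linarith)).1 h
    exact ⟨by nlinarith, hb⟩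
  · rintro ⟨hQ, hb⟩
    rw [Real.sqrt_lt' (by linarith)]
    nlinarith

lemma sub_sqrt_discrim_div_lt_one_iff (ha : 0 < a) :
    (b - √(b ^ 2 - 4 * a)) / (2 * a) < 1 ↔ a - b + 1 < 0 ∨ b < 2 * a := by
  rw [div_lt_one (by positivity), sub_lt_comm]
  constructor
  · intro h
    refine (lt_or_ge b (2 * a)).symm.imp_left fun hb => ?_
    have hsq := (Real.lt_sqrt (by linarith)).1 h
    nlinarith
  · rintro (hQ | hb)
    · exact Real.lt_sqrt_of_sq_lt (by nlinarith)
    · linarith [Real.sqrt_nonneg (b ^ 2 - 4 * a)]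

end QuadraticRoots

lemma one_lt_sub_two_mul_sub_two_iff {p q : ℕ} (hp : 2 ≤ p) (hq : 2 ≤ q) :
    1 < ((p : ℝ) - 2) * ((q : ℝ) - 2) ↔ 3 ≤ p ∧ 3 ≤ q ∧ ¬(p = 3 ∧ q = 3) := by
  obtain ⟨m, rfl⟩ := Nat.exists_eq_add_of_le' hp
  obtain ⟨n, rfl⟩ := Nat.exists_eq_add_of_le' hq
  push_cast
  simp only [add_sub_cancel_right]
  norm_cast
  rcases m with _ | _ | m <;> rcases n with _ | _ | n <;> simp
  nlinarith

open QuadraticRoots in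
theorem double_star_quadratic_roots (p q : ℕ) (hp : 2 ≤ p) (hq : 2 ≤ q) :
    ∃ yminus yplus : ℝ,
      yminus = ((p : ℝ) + q - 1 - Real.sqrt (((p : ℝ) - q) ^ 2 + 2 * ((p : ℝ) + q) - 3)) /
        (2 * ((p : ℝ) - 1) * ((q : ℝ) - 1)) ∧
      yplus = ((p : ℝ) + q - 1 + Real.sqrt (((p : ℝ) - q) ^ 2 + 2 * ((p : ℝ) + q) - 3)) /
        (2 * ((p : ℝ) - 1) * ((q : ℝ) - 1)) ∧
      0 < yminus ∧ yminus ≤ yplus ∧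
      ((p : ℝ) - 1) * ((q : ℝ) - 1) * yminus ^ 2 - ((p : ℝ) + q - 1) * yminus + 1 = 0 ∧
      ((p : ℝ) - 1) * ((q : ℝ) - 1) * yplus ^ 2 - ((p : ℝ) + q - 1) * yplus + 1 = 0 ∧
      (yplus < 1 ↔ (3 ≤ p ∧ 3 ≤ q ∧ ¬(p = 3 ∧ q = 3))) ∧
      yminus < 1 := by
  have hp' : (2 : ℝ) ≤ p := by exact_mod_cast hp
  have hq' : (2 : ℝ) ≤ q := by exact_mod_cast hq
  have hdiscrim : ((p : ℝ) - q) ^ 2 + 2 * ((p : ℝ) + q) - 3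
      = ((p : ℝ) + q - 1) ^ 2 - 4 * (((p : ℝ) - 1) * ((q : ℝ) - 1)) := by ring
  have hden : 2 * ((p : ℝ) - 1) * ((q : ℝ) - 1) = 2 * (((p : ℝ) - 1) * ((q : ℝ) - 1)) := by ring
  have hQ1 : ((p : ℝ) - 1) * ((q : ℝ) - 1) - ((p : ℝ) + q - 1) + 1
      = ((p : ℝ) - 2) * ((q : ℝ) - 2) - 1 := by ring
  rw [hdiscrim, hden]
  set a := ((p : ℝ) - 1) * ((q : ℝ) - 1)
  set b := (p : ℝ) + q - 1
  have ha : 0 < a := mul_pos (by linarith) (by linarith)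
  have hb : 2 < b := by linarith
  have hdiscrim_pos : 0 < b ^ 2 - 4 * a := by rw [← hdiscrim]; nlinarith
  have hvertex : 2 * a - b = 2 * (a - b + 1) + (b - 2) := by ring
  refine ⟨_, _, rfl, rfl, ?_, by gcongr; linarith [Real.sqrt_nonneg (b ^ 2 - 4 * a)],
    ?_, eval_add_div_two_mul_eq_zero ha.ne' (Real.sq_sqrt hdiscrim_pos.le), ?_, ?_⟩
  · exact div_pos (by linarith [sqrt_discrim_lt ha (by linarith : 0 < b)]) (by positivity)
  · have hminus := eval_add_div_two_mul_eq_zero (b := b) (s := -√(b ^ 2 - 4 * a)) ha.ne'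
      (by rw [neg_sq, Real.sq_sqrt hdiscrim_pos.le])
    rwa [← sub_eq_add_neg] at hminus
  · rw [add_sqrt_discrim_div_lt_one_iff ha, hQ1, sub_pos,
      ← one_lt_sub_two_mul_sub_two_iff hp hq]
    exact ⟨fun h => h.1, fun h => ⟨h, by linarith⟩⟩
  · rw [sub_sqrt_discrim_div_lt_one_iff ha]
    exact (lt_or_ge (a - b + 1) 0).imp_right fun hQ => by linarith
end

section
/- Let a₀ > 0 and let J be the two-sided Jacobi operator on ℓ²(ℤ) with zero diagonal and off-diagonal entries a_j = 1 for j ≠ 0 and a_0. If a₀ > 1, then ±(a₀ + 1/a₀) are eigenvalues of J (with ℓ² eigenvectors), and if 0 < a₀ ≤ 1 then J has no eigenvalues outside [−2,2]. -/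
/-!
For `λ = r + r⁻¹` with `0 < r < 1`, the free recurrence `h (n - 1) + h (n + 1) = λ h n`
has characteristic roots `r` and `r⁻¹`, so on each side of the defect a decaying solution
is geometric with ratio `r`: `h (-m) = h 0 * r ^ m` and `h (m + 1) = h 1 * r ^ m`.
The two equations at the defect then read `h 0 = a₀ r h 1` and `h 1 = a₀ r h 0`, which
force `h = 0` when `|a₀| ≤ 1`. For `|a₀| > 1` the ratio `r = a₀⁻¹` makes them consistent,
giving the eigenvalue `a₀ + a₀⁻¹`. The sign flip `h n ↦ (-1) ^ n h n` turns an eigenvalue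
`λ` into `-λ`.
-/

/-- `l²(ℤ)`-eigenvalue of the two-sided Jacobi operator with zero diagonal and
off-diagonal entries `a`. -/
def IsJacobiEigenvalue (a : ℤ → ℝ) (lam : ℝ) : Prop :=
  ∃ h : ℤ → ℝ, h ≠ 0 ∧ Summable (fun n : ℤ => (h n) ^ 2) ∧
    ∀ n : ℤ, a (n - 1) * h (n - 1) + a n * h (n + 1) = lam * h n

open Filter Topology

theorem IsJacobiEigenvalue.neg {a : ℤ → ℝ} {lam : ℝ} (H : IsJacobiEigenvalue a lam) :
    IsJacobiEigenvalue a (-lam) := by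
  obtain ⟨h, hne, hsum, heq⟩ := H
  have hm1 : (-1 : ℝ) ≠ 0 := by norm_num
  have hsign (n : ℤ) : ((-1 : ℝ) ^ n) ^ 2 = 1 := by rw [← sq_abs, abs_neg_one_zpow, one_pow]
  refine ⟨fun n => (-1) ^ n * h n, fun h0 => hne (funext fun n => ?_), ?_, fun n => ?_⟩
  · exact (mul_eq_zero.mp (congrFun h0 n)).resolve_left (zpow_ne_zero n hm1)
  · simpa only [mul_pow, hsign, one_mul] using hsum
  · simp only [zpow_sub_one₀ hm1, zpow_add_one₀ hm1]
    linear_combination (-(-1 : ℝ) ^ n) * heq n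

theorem tendsto_cofinite_zero_of_summable_sq {α : Type*} {h : α → ℝ}
    (hs : Summable fun n => h n ^ 2) : Tendsto h cofinite (𝓝 0) := by
  rw [tendsto_zero_iff_abs_tendsto_zero]
  simpa [Function.comp_def, Real.sqrt_sq_eq_abs] using hs.tendsto_cofinite_zero.sqrt

theorem exists_add_inv_eq_of_two_lt {lam : ℝ} (hlam : 2 < lam) :
    ∃ r : ℝ, 0 < r ∧ r < 1 ∧ r + r⁻¹ = lam := by
  set s := √(lam ^ 2 - 4)
  have hs : s ^ 2 = lam ^ 2 - 4 := Real.sq_sqrt (by nlinarith)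
  have hslam : s < lam := by nlinarith [Real.sqrt_nonneg (lam ^ 2 - 4)]
  have hs2 : lam - 2 < s := by nlinarith [Real.sqrt_nonneg (lam ^ 2 - 4)]
  refine ⟨(lam - s) / 2, by linarith, by linarith, ?_⟩
  have : lam - s ≠ 0 := by linarith
  field_simp
  linear_combination hs

/-- `f (m + 1) - r * f m` gets multiplied by `s` at each step, so decay forces it to vanish. -/
theorem eq_mul_pow_of_recurrence_of_tendsto_zero {r s : ℝ} (hs : 1 < |s|) {f : ℕ → ℝ}
    (hrec : ∀ m, f (m + 2) = (r + s) * f (m + 1) - r * s * f m)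
    (hf : Tendsto f atTop (𝓝 0)) (m : ℕ) : f m = f 0 * r ^ m := by
  set u : ℕ → ℝ := fun m => f (m + 1) - r * f m
  have hu_pow (m : ℕ) : u m = u 0 * s ^ m := by
    induction m with
    | zero => simp
    | succ k ih =>
      have : u (k + 1) = s * u k := by simp only [u]; linear_combination hrec k
      rw [this, ih, pow_succ]; ring
  have hu_lim : Tendsto u atTop (𝓝 0) := by
    simpa using (hf.comp (tendsto_add_atTop_nat 1)).sub (hf.const_mul r)
  have hu0 : u 0 = 0 := by
    have hs0 : s ≠ 0 := by rintro rfl; norm_num at hs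
    have hinv : |s⁻¹| < 1 := by rw [abs_inv]; exact inv_lt_one_of_one_lt₀ hs
    have := hu_lim.mul (tendsto_pow_atTop_nhds_zero_of_abs_lt_one hinv)
    rw [mul_zero] at this
    refine tendsto_const_nhds_iff.mp (this.congr fun m => ?_)
    rw [hu_pow m, inv_pow, mul_assoc, mul_inv_cancel₀ (pow_ne_zero m hs0), mul_one]
  induction m with
  | zero => simp
  | succ k ih =>
    have : u k = 0 := by rw [hu_pow, hu0, zero_mul]
    simp only [u] at this
    rw [pow_succ, ← mul_assoc, ← ih]
    linear_combination this

section DecayingSolution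

variable {a h : ℤ → ℝ} {r : ℝ}

theorem jacobi_decaying_solution_eq_mul_pow_right (hr0 : r ≠ 0) (hr1 : |r| < 1)
    (ha : ∀ j, 0 < j → a j = 1)
    (heq : ∀ n, a (n - 1) * h (n - 1) + a n * h (n + 1) = (r + r⁻¹) * h n)
    (hh : Tendsto h cofinite (𝓝 0)) (m : ℕ) : h (m + 1) = h 1 * r ^ m := by
  have hs : 1 < |r⁻¹| := by rw [abs_inv]; exact (one_lt_inv₀ (abs_pos.mpr hr0)).mpr hr1
  have hrec (m : ℕ) :
      h (↑(m + 2) + 1) = (r + r⁻¹) * h (↑(m + 1) + 1) - r * r⁻¹ * h (↑m + 1) := by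
    have := heq (m + 2)
    rw [ha _ (by omega), ha _ (by omega)] at this
    push_cast
    rw [mul_inv_cancel₀ hr0]
    ring_nf at this ⊢
    linear_combination this
  have hinj : Function.Injective fun m : ℕ => (m : ℤ) + 1 := fun _ _ hxy => by simpa using hxy
  have hlim : Tendsto (fun m : ℕ => h (m + 1)) atTop (𝓝 0) :=
    hh.comp (Nat.cofinite_eq_atTop ▸ hinj.tendsto_cofinite)
  simpa using eq_mul_pow_of_recurrence_of_tendsto_zero hs hrec hlim m

theorem jacobi_decaying_solution_eq_mul_pow_left (hr0 : r ≠ 0) (hr1 : |r| < 1)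
    (ha : ∀ j, j < 0 → a j = 1)
    (heq : ∀ n, a (n - 1) * h (n - 1) + a n * h (n + 1) = (r + r⁻¹) * h n)
    (hh : Tendsto h cofinite (𝓝 0)) (m : ℕ) : h (-m) = h 0 * r ^ m := by
  have hs : 1 < |r⁻¹| := by rw [abs_inv]; exact (one_lt_inv₀ (abs_pos.mpr hr0)).mpr hr1
  have hrec (m : ℕ) :
      h (-↑(m + 2)) = (r + r⁻¹) * h (-↑(m + 1)) - r * r⁻¹ * h (-↑m) := by
    have := heq (-m - 1)
    rw [ha _ (by omega), ha _ (by omega)] at this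
    push_cast
    rw [mul_inv_cancel₀ hr0]
    ring_nf at this ⊢
    linear_combination this
  have hinj : Function.Injective fun m : ℕ => -(m : ℤ) := fun _ _ hxy => by simpa using hxy
  have hlim : Tendsto (fun m : ℕ => h (-m)) atTop (𝓝 0) :=
    hh.comp (Nat.cofinite_eq_atTop ▸ hinj.tendsto_cofinite)
  simpa using eq_mul_pow_of_recurrence_of_tendsto_zero hs hrec hlim m

end DecayingSolution

theorem not_isJacobiEigenvalue_single_weight_of_two_lt {a₀ lam : ℝ} (ha : |a₀| ≤ 1)
    (hlam : 2 < lam) : ¬ IsJacobiEigenvalue (fun j => if j = 0 then a₀ else 1) lam := by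
  obtain ⟨r, hr0, hr1, rfl⟩ := exists_add_inv_eq_of_two_lt hlam
  rintro ⟨h, hne, hsum, heq⟩
  have hh := tendsto_cofinite_zero_of_summable_sq hsum
  have hr : |r| < 1 := by rwa [abs_of_pos hr0]
  have hright := jacobi_decaying_solution_eq_mul_pow_right hr0.ne' hr
    (fun j hj => if_neg hj.ne') heq hh
  have hleft := jacobi_decaying_solution_eq_mul_pow_left hr0.ne' hr
    (fun j hj => if_neg hj.ne) heq hh
  have hrr : r * r⁻¹ = 1 := mul_inv_cancel₀ hr0.ne'
  have h0 : h 0 = a₀ * r * h 1 := by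
    have k0 := heq 0
    have e := hleft 1
    norm_num at k0 e
    rw [e] at k0
    linear_combination -r * k0 - h 0 * hrr
  have h1 : h 1 = a₀ * r * h 0 := by
    have k1 := heq 1
    have e := hright 1
    norm_num at k1 e
    rw [e] at k1
    linear_combination -r * k1 - h 1 * hrr
  have hcontr : |a₀ * r| < 1 := by
    rw [abs_mul, abs_of_pos hr0]; nlinarith [abs_nonneg a₀]
  have hh0 : h 0 = 0 := by
    have : h 0 * (1 - (a₀ * r) ^ 2) = 0 := by linear_combination h0 + a₀ * r * h1
    refine (mul_eq_zero.mp this).resolve_right ?_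
    nlinarith [abs_mul_abs_self (a₀ * r), abs_nonneg (a₀ * r)]
  have hh1 : h 1 = 0 := by rw [h1, hh0, mul_zero]
  refine hne (funext fun n => ?_)
  obtain ⟨m, rfl | rfl⟩ := Int.eq_nat_or_neg n
  · cases m with
    | zero => exact hh0
    | succ k => simpa [hh1] using hright k
  · simpa [hh0] using hleft m

theorem not_isJacobiEigenvalue_single_weight {a₀ lam : ℝ} (ha : |a₀| ≤ 1) (hlam : 2 < |lam|) :
    ¬ IsJacobiEigenvalue (fun j => if j = 0 then a₀ else 1) lam := by
  rcases lt_abs.mp hlam with hlam | hlam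
  · exact not_isJacobiEigenvalue_single_weight_of_two_lt ha hlam
  · exact fun H => not_isJacobiEigenvalue_single_weight_of_two_lt ha hlam H.neg

theorem isJacobiEigenvalue_single_weight {a₀ : ℝ} (ha : 1 < |a₀|) :
    IsJacobiEigenvalue (fun j => if j = 0 then a₀ else 1) (a₀ + 1 / a₀) := by
  have ha0 : a₀ ≠ 0 := by rintro rfl; norm_num at ha
  have hq : |(a₀⁻¹) ^ 2| < 1 := by
    rw [abs_pow, abs_inv, inv_pow]; exact inv_lt_one_of_one_lt₀ (one_lt_pow₀ ha two_ne_zero)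
  refine ⟨fun n => if 1 ≤ n then a₀⁻¹ ^ (n - 1) else a₀ ^ n,
    fun h0 => by simpa using congrFun h0 0, ?_, fun n => ?_⟩
  · refine .of_nat_of_neg ((summable_nat_add_iff 1).mp ?_) ?_ <;>
      refine (summable_geometric_of_abs_lt_one hq).congr fun k => ?_
    · simp [← pow_mul, mul_comm]
    · simp [← pow_mul, mul_comm, show ¬ (1 : ℤ) ≤ -k by omega]
  · rcases lt_trichotomy n 0 with hn | rfl | hn
    · simp only [if_neg (by omega : n - 1 ≠ 0), if_neg hn.ne,
        if_neg (by omega : ¬ 1 ≤ n - 1), if_neg (by omega : ¬ 1 ≤ n + 1),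
        if_neg (by omega : ¬ 1 ≤ n), zpow_sub_one₀ ha0, zpow_add_one₀ ha0]
      field_simp
      ring
    · simp
      field_simp
      ring
    · rcases eq_or_lt_of_le (show 1 ≤ n by omega) with rfl | hn
      · simp
      · simp only [if_neg (by omega : n - 1 ≠ 0), if_neg (by omega : n ≠ 0),
          if_pos (by omega : 1 ≤ n - 1), if_pos (by omega : 1 ≤ n + 1),
          if_pos (by omega : 1 ≤ n),
          zpow_sub_one₀ (inv_ne_zero ha0), show n + 1 - 1 = n - 1 + 1 by ring,
          zpow_add_one₀ (inv_ne_zero ha0)]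
        field_simp

theorem two_sided_jacobi_single_weight (a₀ : ℝ) (ha : 0 < a₀) :
    (1 < a₀ →
      IsJacobiEigenvalue (fun j => if j = 0 then a₀ else 1) (a₀ + 1/a₀) ∧
      IsJacobiEigenvalue (fun j => if j = 0 then a₀ else 1) (-(a₀ + 1/a₀))) ∧
    (a₀ ≤ 1 → ∀ lam : ℝ, lam ∉ Set.Icc (-2 : ℝ) 2 →
      ¬ IsJacobiEigenvalue (fun j => if j = 0 then a₀ else 1) lam) := by
  refine ⟨fun ha1 => ?_, fun ha1 lam hlam => ?_⟩
  · have H := isJacobiEigenvalue_single_weight (ha1.trans_le (le_abs_self a₀))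
    exact ⟨H, H.neg⟩
  · rw [Set.mem_Icc, ← abs_le, not_le] at hlam
    exact not_isJacobiEigenvalue_single_weight (abs_le.mpr ⟨by linarith, ha1⟩) hlam
end

section
/- For n ≥ 1, the n×n Jacobi matrix F with zero off-diagonal 1's, diagonal entries b₁ = −1 and b_j = 0 for j ≥ 2, has characteristic polynomial det(F + xI) = U_n(x/2) − U_{n-1}(x/2), where U_k denotes the Chebyshev polynomial of the second kind; consequently the eigenvalues of F are {2 cos(2πj/(2n+1)) : j = 1, …, n}. -/
/-!
For `θ = 2πj/(2n+1)` with `1 ≤ j ≤ n`, the vector `(sin ((2k+1)θ/2))_{k<n}` is an eigenvector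
of `F` with eigenvalue `2 cos θ`: interior rows are the identity
`sin (x - θ) + sin (x + θ) = 2 cos θ sin x`, the first row holds because
`sin (-θ/2) = -sin (θ/2)`, and the last one because `sin ((2n+1)θ/2) = sin (πj) = 0`.
These `n` eigenvalues are distinct, so they are all the roots of the characteristic polynomial.

With `S n (x) = U n (x/2)`, the polynomial `S n - S (n-1)` is monic of degree `n`, and
`(S n - S (n-1)) (2 cos t) · sin t = 2 sin (t/2) cos ((2n+1)t/2)` shows that it vanishes at the `n`
distinct points `-2 cos θ`. So does the characteristic polynomial of `-F`, which is monic of degree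
`n` too; hence the two agree, and evaluating at `x` gives `det (F + x I)`.
-/

open Polynomial Matrix Real

namespace Polynomial.Chebyshev

variable (R : Type*) [CommRing R] [Nontrivial R]

theorem degree_S_natCast (n : ℕ) : (S R n).degree = n := by
  induction n using Nat.twoStepInduction with
  | zero => simp
  | one => simp
  | more n ih₁ ih₂ =>
    push_cast at ih₂ ⊢
    have hlt : (S R n).degree < (X * S R (n + 1)).degree := by
      rw [X_mul, degree_mul_X, ih₁, ih₂]; norm_cast; omega
    rw [S_add_two, degree_sub_eq_left_of_degree_lt hlt, X_mul, degree_mul_X, ih₂]; norm_cast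

theorem monic_S_natCast (n : ℕ) : (S R n).Monic := by
  induction n using Nat.twoStepInduction with
  | zero => simp
  | one => simp
  | more n _ ih =>
    push_cast at ih ⊢
    refine S_add_two R n ▸ (monic_X.mul ih).sub_of_left ?_
    rw [X_mul, degree_mul_X, degree_S_natCast, ← Nat.cast_succ, degree_S_natCast]
    norm_cast; omega

theorem degree_S_sub_one_lt (n : ℕ) : (S R (n - 1)).degree < (S R n).degree := by
  rw [degree_S_natCast]
  rcases n with _ | n
  · simp
  · rw [Nat.cast_succ, add_sub_cancel_right, degree_S_natCast]
    exact_mod_cast n.lt_succ_self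

theorem eval_S_sub_S_two_mul_cos_mul_sin (n : ℤ) (t : ℝ) :
    (S ℝ n - S ℝ (n - 1)).eval (2 * cos t) * sin t =
      2 * sin (t / 2) * cos ((2 * n + 1) * t / 2) := by
  rw [eval_sub, sub_mul, S_two_mul_real_cos, S_two_mul_real_cos, sin_sub_sin]
  push_cast
  ring_nf

end Polynomial.Chebyshev

theorem Matrix.isRoot_charpoly_of_mulVec_eq_smul {ι K : Type*} [Fintype ι] [DecidableEq ι]
    [CommRing K] [IsDomain K] {M : Matrix ι ι K} {v : ι → K} {μ : K} (hv : v ≠ 0)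
    (h : M *ᵥ v = μ • v) : M.charpoly.IsRoot μ := by
  rw [IsRoot, eval_charpoly, ← exists_mulVec_eq_zero_iff]
  refine ⟨v, hv, ?_⟩
  rw [sub_mulVec, h, scalar_apply, ← smul_one_eq_diagonal, smul_mulVec, one_mulVec, sub_self]

theorem Matrix.det_add_smul_one_eq_eval_charpoly_neg {ι K : Type*} [Fintype ι] [DecidableEq ι]
    [CommRing K] (M : Matrix ι ι K) (x : K) : (M + x • 1).det = (-M).charpoly.eval x := by
  rw [eval_charpoly, scalar_apply, ← smul_one_eq_diagonal, sub_neg_eq_add, add_comm]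

def oddCycleTail (n : ℕ) : Matrix (Fin n) (Fin n) ℝ := of fun i j =>
  if i = j then (if (i : ℕ) = 0 then -1 else 0)
  else if (i : ℕ) + 1 = (j : ℕ) ∨ (j : ℕ) + 1 = (i : ℕ) then 1 else 0

noncomputable def oddCyclePoly (n : ℕ) : ℝ[X] := Chebyshev.S ℝ n - Chebyshev.S ℝ (n - 1)

noncomputable def oddCycleAngle (n j : ℕ) : ℝ := 2 * π * j / (2 * n + 1)

theorem oddCyclePoly_monic (n : ℕ) : (oddCyclePoly n).Monic :=
  (Chebyshev.monic_S_natCast ℝ n).sub_of_left (Chebyshev.degree_S_sub_one_lt ℝ n)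

theorem degree_oddCyclePoly (n : ℕ) : (oddCyclePoly n).degree = n := by
  rw [oddCyclePoly, degree_sub_eq_left_of_degree_lt (Chebyshev.degree_S_sub_one_lt ℝ n),
    Chebyshev.degree_S_natCast]

theorem eval_oddCyclePoly (n : ℕ) (x : ℝ) : (oddCyclePoly n).eval x =
    (Chebyshev.U ℝ n).eval (x / 2) - (Chebyshev.U ℝ (n - 1)).eval (x / 2) := by
  simp only [oddCyclePoly, Chebyshev.S_eq_U_comp_half_mul_X, eval_sub, eval_comp, eval_mul, eval_C,
    eval_X, invOf_eq_inv, inv_mul_eq_div]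

section Angle

variable {n j : ℕ}

theorem mul_oddCycleAngle : (2 * n + 1) * oddCycleAngle n j = 2 * π * j := by
  rw [oddCycleAngle]; field_simp

theorem oddCycleAngle_pos (hj : 1 ≤ j) : 0 < oddCycleAngle n j := by
  have : (1 : ℝ) ≤ j := by exact_mod_cast hj
  unfold oddCycleAngle
  positivity

theorem oddCycleAngle_lt_pi (hj : j ≤ n) : oddCycleAngle n j < π := by
  rw [oddCycleAngle, div_lt_iff₀ (by positivity)]
  have : (j : ℝ) ≤ n := by exact_mod_cast hj
  nlinarith [pi_pos]

end Angle

theorem isRoot_oddCyclePoly {n j : ℕ} (hj₁ : 1 ≤ j) (hjn : j ≤ n) :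
    (oddCyclePoly n).IsRoot (-(2 * cos (oddCycleAngle n j))) := by
  set θ := oddCycleAngle n j
  have hsin : sin (π - θ) ≠ 0 := by
    rw [sin_pi_sub]
    exact (sin_pos_of_pos_of_lt_pi (oddCycleAngle_pos hj₁) (oddCycleAngle_lt_pi hjn)).ne'
  have hcos : cos ((2 * (n : ℤ) + 1) * (π - θ) / 2) = 0 := by
    rw [cos_eq_zero_iff]
    refine ⟨n - j, ?_⟩
    have := mul_oddCycleAngle (n := n) (j := j)
    push_cast
    linear_combination -this / 2
  have key := Chebyshev.eval_S_sub_S_two_mul_cos_mul_sin n (π - θ)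
  rw [hcos, mul_zero, cos_pi_sub, mul_neg] at key
  exact (mul_eq_zero.mp key).resolve_right hsin

-- The entry `-1` in the corner is absorbed by the reflection `w (-1) = -w 0`.
theorem oddCycleTail_mulVec_apply {n : ℕ} (w : ℤ → ℝ) (h₀ : w (-1) = -w 0) (hn : w n = 0)
    (i : Fin n) : (oddCycleTail n *ᵥ fun k => w k) i = w (i - 1) + w (i + 1) := by
  obtain ⟨i, hi⟩ := i
  have hsplit : ∀ j : ℕ, (if i = j then (if i = 0 then -1 else 0)
      else if i + 1 = j ∨ j + 1 = i then (1 : ℝ) else 0) * w j =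
      (if j = 0 then (if i = 0 then -w 0 else 0) else 0) + (if j = i + 1 then w j else 0) +
        (if j + 1 = i then w j else 0) := by
    intro j; split_ifs <;> first | omega | simp_all
  have hnext : (if i + 1 < n then w ↑(i + 1) else 0) = w (i + 1) := by
    split_ifs with h
    · push_cast; rfl
    · obtain rfl : n = i + 1 := by omega
      exact_mod_cast hn.symm
  simp only [mulVec, dotProduct, oddCycleTail, of_apply, Fin.ext_iff]
  rw [Fin.sum_univ_eq_sum_range (fun j => (if i = j then (if i = 0 then -1 else 0)
      else if i + 1 = j ∨ j + 1 = i then (1 : ℝ) else 0) * w j)]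
  simp only [hsplit, Finset.sum_add_distrib, Finset.sum_ite_eq', Finset.mem_range, hnext,
    if_pos (show 0 < n by omega)]
  rcases i with _ | k
  · simp [h₀]
  · simp [show k < n by omega, add_comm]

theorem oddCycleTail_mulVec_sin {n : ℕ} {θ : ℝ} (hθ : sin ((2 * n + 1) * θ / 2) = 0) :
    oddCycleTail n *ᵥ (fun k : Fin n => sin ((2 * k + 1) * θ / 2)) =
      (2 * cos θ) • fun k : Fin n => sin ((2 * k + 1) * θ / 2) := by
  ext i
  have h := oddCycleTail_mulVec_apply (fun k : ℤ => sin ((2 * k + 1) * θ / 2)) ?_ ?_ i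
  · push_cast at h
    set x := (2 * (i : ℝ) + 1) * θ / 2
    rw [h, Pi.smul_apply, smul_eq_mul, show (2 * ((i : ℝ) - 1) + 1) * θ / 2 = x - θ by ring,
      show (2 * ((i : ℝ) + 1) + 1) * θ / 2 = x + θ by ring, sin_sub, sin_add]
    ring
  · rw [← sin_neg]; congr 1; push_cast; ring
  · simpa using hθ

theorem exists_mulVec_oddCycleTail_eq_smul {n j : ℕ} (hj₁ : 1 ≤ j) (hjn : j ≤ n) :
    ∃ v ≠ 0, oddCycleTail n *ᵥ v = (2 * cos (oddCycleAngle n j)) • v := by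
  refine ⟨_, fun h => ?_, oddCycleTail_mulVec_sin ?_⟩
  · have h₀ := congr_fun h ⟨0, by omega⟩
    simp only [CharP.cast_eq_zero, mul_zero, zero_add, one_mul, Pi.zero_apply] at h₀
    exact (sin_pos_of_pos_of_lt_pi (half_pos (oddCycleAngle_pos hj₁))
      (by linarith [oddCycleAngle_lt_pi hjn, pi_pos])).ne' h₀
  · rw [mul_oddCycleAngle, mul_assoc, mul_div_cancel_left₀ _ two_ne_zero, mul_comm]
    exact sin_nat_mul_pi j

theorem injOn_two_mul_cos_oddCycleAngle (n : ℕ) :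
    Set.InjOn (fun j => 2 * cos (oddCycleAngle n j)) (Finset.Icc 1 n) := by
  refine (mul_right_injective₀ two_ne_zero).comp_injOn <|
    injOn_cos.comp (fun a _ b _ h => ?_) fun j hj => ?_
  · have := congrArg (· * (2 * (n : ℝ) + 1) / (2 * π)) h
    simp only [oddCycleAngle] at this
    field_simp at this
    exact_mod_cast this
  · rw [Finset.coe_Icc, Set.mem_Icc] at hj
    exact ⟨(oddCycleAngle_pos hj.1).le, (oddCycleAngle_lt_pi hj.2).le⟩

theorem roots_charpoly_oddCycleTail (n : ℕ) : (oddCycleTail n).charpoly.roots =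
    ((Finset.Icc 1 n).image fun j => 2 * cos (oddCycleAngle n j)).val := by
  refine roots_eq_of_degree_eq_card (fun μ hμ => ?_) ?_
  · obtain ⟨j, hj, rfl⟩ := Finset.mem_image.mp hμ
    rw [Finset.mem_Icc] at hj
    obtain ⟨v, hv, h⟩ := exists_mulVec_oddCycleTail_eq_smul hj.1 hj.2
    exact isRoot_charpoly_of_mulVec_eq_smul hv h
  · rw [Finset.card_image_of_injOn (injOn_two_mul_cos_oddCycleAngle n), Nat.card_Icc,
      charpoly_degree_eq_dim, Fintype.card_fin, Nat.add_sub_cancel]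

theorem charpoly_neg_oddCycleTail (n : ℕ) : (-oddCycleTail n).charpoly = oddCyclePoly n := by
  set s := (Finset.Icc 1 n).image fun j => -(2 * cos (oddCycleAngle n j))
  have hs : s.card = n := by
    rw [Finset.card_image_of_injOn fun a ha b hb h =>
      injOn_two_mul_cos_oddCycleAngle n ha hb (neg_inj.mp h), Nat.card_Icc, Nat.add_sub_cancel]
  refine eq_of_degree_le_of_eval_finset_eq s ?_ ?_ ?_ fun μ hμ => ?_
  · rw [charpoly_degree_eq_dim, hs, Fintype.card_fin]
  · rw [charpoly_degree_eq_dim, degree_oddCyclePoly, Fintype.card_fin]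
  · rw [(charpoly_monic _).leadingCoeff, (oddCyclePoly_monic n).leadingCoeff]
  · obtain ⟨j, hj, rfl⟩ := Finset.mem_image.mp hμ
    rw [Finset.mem_Icc] at hj
    obtain ⟨v, hv, h⟩ := exists_mulVec_oddCycleTail_eq_smul hj.1 hj.2
    rw [isRoot_charpoly_of_mulVec_eq_smul hv (by rw [neg_mulVec, h, neg_smul]),
      isRoot_oddCyclePoly hj.1 hj.2]

theorem odd_cycle_finite_component_general (n : ℕ)
    (F : Matrix (Fin n) (Fin n) ℝ)
    (hF : ∀ i j : Fin n, F i j =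
      if i = j then (if (i : ℕ) = 0 then -1 else 0)
      else if (i : ℕ) + 1 = (j : ℕ) ∨ (j : ℕ) + 1 = (i : ℕ) then 1 else 0) :
    (∀ x : ℝ, (F + x • (1 : Matrix (Fin n) (Fin n) ℝ)).det =
      (Polynomial.Chebyshev.U ℝ n).eval (x / 2) -
      (Polynomial.Chebyshev.U ℝ (n - 1)).eval (x / 2)) ∧
    {μ : ℝ | F.charpoly.IsRoot μ} =
      {μ : ℝ | ∃ j : ℕ, 1 ≤ j ∧ j ≤ n ∧
        μ = 2 * Real.cos (2 * Real.pi * j / (2 * n + 1))} := by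
  obtain rfl : F = oddCycleTail n := Matrix.ext hF
  refine ⟨fun x => ?_, Set.ext fun μ => ?_⟩
  · rw [det_add_smul_one_eq_eval_charpoly_neg, charpoly_neg_oddCycleTail, eval_oddCyclePoly]
  · rw [Set.mem_ofPred_eq, ← mem_roots (charpoly_monic _).ne_zero, roots_charpoly_oddCycleTail]
    simp [oddCycleAngle, eq_comm, and_assoc]

theorem odd_cycle_finite_component (n : ℕ) (hn : 1 ≤ n)
    (F : Matrix (Fin n) (Fin n) ℝ)
    (hF : ∀ i j : Fin n, F i j =
      if i = j then (if (i : ℕ) = 0 then -1 else 0)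
      else if (i : ℕ) + 1 = (j : ℕ) ∨ (j : ℕ) + 1 = (i : ℕ) then 1 else 0) :
    (∀ x : ℝ, (F + x • (1 : Matrix (Fin n) (Fin n) ℝ)).det =
      (Polynomial.Chebyshev.U ℝ n).eval (x / 2) -
      (Polynomial.Chebyshev.U ℝ (n - 1)).eval (x / 2)) ∧
    {μ : ℝ | F.charpoly.IsRoot μ} =
      {μ : ℝ | ∃ j : ℕ, 1 ≤ j ∧ j ≤ n ∧
        μ = 2 * Real.cos (2 * Real.pi * j / (2 * n + 1))} :=
  odd_cycle_finite_component_general n F hF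
end

section
/- For the Jacobi matrix J with b_j = 0 for all j, a_j = 1 for j ≠ q, and a_q > 0 arbitrary, the perturbation determinant with respect to the free Jacobi matrix J₀ satisfies L(z + 1/z; J, J₀) = 1 + (1 − a_q²) z² (z^{2q} − 1)/(z² − 1) for z in the open unit disk, z ≠ 0. -/
/-- Matrix entries of the resolvent `(J₀ - (z + 1/z))⁻¹` of the free Jacobi matrix,
in the standard basis `{e_i}_{i ≥ 1}`: `r_{ij}(z) = (z^{|i-j|} - z^{i+j})/(z - z⁻¹)`. -/
noncomputable def freeResolventEntry (z : ℂ) (i j : ℕ) : ℂ :=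
  (z ^ (max i j - min i j) - z ^ (i + j)) / (z - z⁻¹)

/-!
Since `J - J₀ = (a_q - 1)(e_q e_{q+1}ᵀ + e_{q+1} e_qᵀ)`, the perturbation determinant is the `2 × 2`
determinant `(1 + c r_{q,q+1})² - c² r_{q,q} r_{q+1,q+1}` with `c = a_q - 1`. All entries share the
denominator `z - z⁻¹`, which is nonzero for `0 < |z| < 1`; clearing it leaves a polynomial identity in
`z` and `z^q`, in which `1 - a_q² = -c (c + 2)`.
-/

lemma freeResolventEntry_comm (z : ℂ) (i j : ℕ) :
    freeResolventEntry z i j = freeResolventEntry z j i := by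
  rw [freeResolventEntry, freeResolventEntry, max_comm, min_comm, add_comm]

lemma freeResolventEntry_self (z : ℂ) (i : ℕ) :
    freeResolventEntry z i i = (1 - z ^ (2 * i)) / (z - z⁻¹) := by
  rw [freeResolventEntry, max_self, min_self, Nat.sub_self, pow_zero, two_mul]

lemma freeResolventEntry_succ (z : ℂ) (i : ℕ) :
    freeResolventEntry z i (i + 1) = (z - z ^ (2 * i + 1)) / (z - z⁻¹) := by
  rw [freeResolventEntry, max_eq_right (Nat.le_add_right i 1), min_eq_left (Nat.le_add_right i 1),
    Nat.add_sub_cancel_left, pow_one, two_mul, add_assoc]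

lemma sub_inv_ne_zero_of_norm_lt_one {𝕜 : Type*} [NormedDivisionRing 𝕜] {z : 𝕜}
    (hz : ‖z‖ < 1) (hz0 : z ≠ 0) : z - z⁻¹ ≠ 0 := by
  refine sub_ne_zero.mpr fun h => ?_
  have hinv : 1 < ‖z⁻¹‖ := by
    rw [norm_inv]
    exact one_lt_inv_iff₀.mpr ⟨norm_pos_iff.mpr hz0, hz⟩
  rw [← h] at hinv
  exact hinv.not_gt hz

lemma det_freeResolvent_offdiag_perturbation (c z : ℂ) (q : ℕ) (hD : z - z⁻¹ ≠ 0) :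
    Matrix.det
      !![1 + c * freeResolventEntry z q (q + 1), c * freeResolventEntry z q q;
          c * freeResolventEntry z (q + 1) (q + 1), 1 + c * freeResolventEntry z (q + 1) q] =
      1 - c * (c + 2) * z ^ 2 * (z ^ (2 * q) - 1) / (z ^ 2 - 1) := by
  have hz0 : z ≠ 0 := by
    rintro rfl
    simp at hD
  have hz2 : z ^ 2 - 1 ≠ 0 := by
    have : z ^ 2 - 1 = z * (z - z⁻¹) := by field_simp
    rw [this]
    exact mul_ne_zero hz0 hD
  rw [Matrix.det_fin_two_of, freeResolventEntry_comm z (q + 1) q, freeResolventEntry_succ,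
    freeResolventEntry_self, freeResolventEntry_self]
  have hpow : z ^ (2 * (q + 1)) = z ^ (2 * q) * z ^ 2 := by ring
  rw [hpow, pow_succ]
  field_simp
  ring

theorem perturbation_determinant_offdiag_rank_two_general (q : ℕ) (a : ℝ)
    (z : ℂ) (hz : ‖z‖ < 1) (hz0 : z ≠ 0) :
    Matrix.det
      (!![1 + (a - 1) * freeResolventEntry z q (q + 1), (a - 1) * freeResolventEntry z q q;
          (a - 1) * freeResolventEntry z (q + 1) (q + 1),
          1 + (a - 1) * freeResolventEntry z (q + 1) q]) =
      1 + (1 - (a : ℂ) ^ 2) * z ^ 2 * (z ^ (2 * q) - 1) / (z ^ 2 - 1) := by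
  rw [det_freeResolvent_offdiag_perturbation _ z q (sub_inv_ne_zero_of_norm_lt_one hz hz0)]
  ring

theorem perturbation_determinant_offdiag_rank_two (q : ℕ) (hq : 1 ≤ q) (a : ℝ)
    (ha : 0 < a) (z : ℂ) (hz : ‖z‖ < 1) (hz0 : z ≠ 0) :
    Matrix.det
      (!![1 + (a - 1) * freeResolventEntry z q (q + 1), (a - 1) * freeResolventEntry z q q;
          (a - 1) * freeResolventEntry z (q + 1) (q + 1),
          1 + (a - 1) * freeResolventEntry z (q + 1) q]) =
      1 + (1 - (a : ℂ) ^ 2) * z ^ 2 * (z ^ (2 * q) - 1) / (z ^ 2 - 1) :=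
  perturbation_determinant_offdiag_rank_two_general q a z hz hz0
end

section
/- Descartes' rule of signs: for a real polynomial a(x) = a₀xⁿ + ⋯ + a_n, the number of positive real roots counted with multiplicity does not exceed the number of sign changes ν(a) in the sequence of nonzero coefficients, and ν(a) minus the number of positive roots is a nonnegative even integer. -/
/-- The number of sign changes in a list of reals: zero entries are discarded and
adjacent pairs of opposite sign are counted. -/
noncomputable def signChanges (l : List ℝ) : ℕ :=
  let l' := l.filter (fun x => decide (x ≠ 0))
  (l'.zip l'.tail).countP (fun p => decide (p.1 * p.2 < 0))

/-!
Mathlib's `Polynomial.roots_countP_pos_le_signVariations` bounds the number of positive roots by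
the number of sign changes, so only the parity of the difference remains. Both numbers are even
exactly when `trailingCoeff * leadingCoeff > 0`. For the sign changes, erasing the leading term
loses one change exactly when the two leading nonzero coefficients have opposite signs. For the
roots, dividing by `X - r` with `r > 0` flips the sign of that product, and a polynomial without
positive roots has the same sign near `0⁺` (that of the trailing coefficient) as near `+∞` (that of
the leading one).

`Polynomial.signVariations` lists the coefficients from the top down and counts runs of equal
nonzero signs; it agrees with `signChanges` of the bottom-up list because the number of sign
changes is invariant under reversal.
-/

open Polynomial Filter

namespace List

variable {α : Type*}

theorem zip_tail_eq_zip_dropLast (l : List α) : l.zip l.tail = l.dropLast.zip l.tail := by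
  induction l with
  | nil => rfl
  | cons x t ih =>
    cases t with
    | nil => rfl
    | cons y s => simp_all

theorem countP_zip_tail_reverse {p : α × α → Bool} (hp : ∀ q, p q.swap = p q) (l : List α) :
    (l.reverse.zip l.reverse.tail).countP p = (l.zip l.tail).countP p := by
  rw [zip_tail_eq_zip_dropLast l, zip_tail_eq_zip_dropLast l.reverse, dropLast_reverse,
    tail_reverse, ← countP_reverse, zip_eq_zipWith, zip_eq_zipWith, reverse_zipWith (by simp),
    reverse_reverse, reverse_reverse, ← zip_eq_zipWith, ← zip_eq_zipWith, ← zip_swap, countP_map]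
  exact countP_congr fun q _ => by simp [hp]

theorem length_destutter'_ne [DecidableEq α] (a : α) (l : List α) :
    (l.destutter' (· ≠ ·) a).length = ((a :: l).zip l).countP (fun q => q.1 ≠ q.2) + 1 := by
  induction l generalizing a with
  | nil => simp
  | cons b t ih =>
    by_cases hab : a = b
    · subst hab; simp [ih]
    · simp [ih, hab]

theorem length_destutter_ne_sub_one [DecidableEq α] (l : List α) :
    (l.destutter (· ≠ ·)).length - 1 = (l.zip l.tail).countP (fun q => q.1 ≠ q.2) := by
  cases l with
  | nil => simp
  | cons a t => simp [destutter_cons', length_destutter'_ne]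

end List

theorem mul_neg_iff_sign_ne {R : Type*} [Ring R] [LinearOrder R] [IsStrictOrderedRing R]
    {x y : R} (hx : x ≠ 0) (hy : y ≠ 0) : x * y < 0 ↔ SignType.sign x ≠ SignType.sign y := by
  rcases hx.lt_or_gt with hx | hx <;> rcases hy.lt_or_gt with hy | hy <;>
    simp [hx, hy, mul_neg_iff, hx.not_gt, hy.not_gt]

theorem signChanges_reverse (l : List ℝ) : signChanges l.reverse = signChanges l := by
  simp only [signChanges, List.filter_reverse]
  exact List.countP_zip_tail_reverse (fun q => by simp [mul_comm]) _

theorem signChanges_eq_length_destutter (l : List ℝ) :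
    signChanges l =
      (((l.map SignType.sign).filter (· ≠ 0)).destutter (· ≠ ·)).length - 1 := by
  rw [List.length_destutter_ne_sub_one, List.filter_map, ← List.map_tail, List.zip_map,
    List.countP_map, signChanges, List.filter_congr (p := (fun x => decide (x ≠ 0)) ∘ SignType.sign)
      (q := fun x : ℝ => decide (x ≠ 0)) (by simp)]
  refine List.countP_congr fun q hq => ?_
  obtain ⟨h1, h2⟩ := List.of_mem_zip hq
  have h1 := (List.mem_filter.mp h1).2
  have h2 := (List.mem_filter.mp (List.mem_of_mem_tail h2)).2
  simp_all [mul_neg_iff_sign_ne]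

theorem IsPreconnected.mul_pos_of_forall_ne_zero {α R : Type*} [TopologicalSpace α] [Ring R]
    [LinearOrder R] [IsStrictOrderedRing R] [TopologicalSpace R] [OrderClosedTopology R]
    {s : Set α} (hs : IsPreconnected s) {f : α → R} (hf : ContinuousOn f s) (hf0 : ∀ x ∈ s, f x ≠ 0)
    {a b : α} (ha : a ∈ s) (hb : b ∈ s) : 0 < f a * f b := by
  by_contra! hab
  obtain ⟨c, hc, hfc⟩ : (0 : R) ∈ f '' s := by
    rcases mul_nonpos_iff.mp hab with h | h
    · exact hs.intermediate_value hb ha hf ⟨h.2, h.1⟩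
    · exact hs.intermediate_value ha hb hf h
  exact hf0 c hc hfc

namespace Polynomial

section Semiring

variable {R : Type*} [Semiring R] {P : R[X]}

theorem trailingCoeff_monomial (n : ℕ) (a : R) : (monomial n a).trailingCoeff = a := by
  by_cases ha : a = 0
  · simp [ha]
  · rw [trailingCoeff, natTrailingDegree_monomial ha, coeff_monomial_same]

theorem trailingCoeff_eraseLead (h : P.eraseLead ≠ 0) :
    P.eraseLead.trailingCoeff = P.trailingCoeff := by
  obtain ⟨i, hi⟩ := Finset.nonempty_of_ne_empty (mt support_eq_empty.mp h)
  have hP : P ≠ 0 := by rintro rfl; exact h eraseLead_zero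
  have hlt : P.natTrailingDegree < P.natDegree := by
    refine (natTrailingDegree_le_of_ne_zero ?_).trans_lt (lt_natDegree_of_mem_eraseLead_support hi)
    rwa [← eraseLead_coeff_of_ne i (ne_natDegree_of_mem_eraseLead_support hi), ← mem_support_iff]
  have hcoeff : ∀ m ≤ P.natTrailingDegree, P.eraseLead.coeff m = P.coeff m :=
    fun m hm => eraseLead_coeff_of_ne m (hm.trans_lt hlt).ne
  have hdeg : P.eraseLead.natTrailingDegree = P.natTrailingDegree := by
    refine le_antisymm (natTrailingDegree_le_of_ne_zero ?_) (le_natTrailingDegree h fun m hm => ?_)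
    · rw [hcoeff _ le_rfl]; exact mt coeff_natTrailingDegree_eq_zero.mp hP
    · rw [hcoeff _ hm.le]; exact coeff_eq_zero_of_lt_natTrailingDegree hm
  rw [trailingCoeff, hdeg, hcoeff _ le_rfl, trailingCoeff]

end Semiring

theorem even_signVariations_iff {R : Type*} [Ring R] [LinearOrder R] [IsStrictOrderedRing R]
    {P : R[X]} (hP : P ≠ 0) :
    Even P.signVariations ↔ 0 < P.trailingCoeff * P.leadingCoeff := by
  induction hn : P.support.card using Nat.strong_induction_on generalizing P with
  | _ n ih =>
    rw [signVariations_eq_eraseLead_add_ite hP]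
    by_cases hQ : P.eraseLead = 0
    · have hmono : P = monomial P.natDegree P.leadingCoeff := by
        simpa [hQ] using (eraseLead_add_monomial_natDegree_leadingCoeff P).symm
      rw [hQ, hmono, trailingCoeff_monomial, leadingCoeff_monomial]
      simp [mul_self_pos.mpr (leadingCoeff_ne_zero.mpr hP), leadingCoeff_ne_zero.mpr hP]
    · have hIH := ih _ (hn ▸ eraseLead_support_card_lt hP) hQ rfl
      rw [trailingCoeff_eraseLead hQ] at hIH
      rw [← sign_eq_one_iff, sign_mul] at hIH ⊢
      have h1 := sign_ne_zero.mpr (trailingCoeff_nonzero_iff_nonzero.mpr hP)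
      have h2 := sign_ne_zero.mpr (leadingCoeff_ne_zero.mpr hP)
      have h3 := sign_ne_zero.mpr (leadingCoeff_ne_zero.mpr hQ)
      revert hIH h1 h2 h3
      generalize SignType.sign P.trailingCoeff = s
      generalize SignType.sign P.leadingCoeff = p
      generalize SignType.sign P.eraseLead.leadingCoeff = q
      cases s <;> cases p <;> cases q <;> simp [Nat.even_add_one]

theorem signVariations_eq_signChanges (P : ℝ[X]) :
    P.signVariations = signChanges ((List.range (P.natDegree + 1)).map P.coeff) := by
  rcases eq_or_ne P 0 with rfl | hP
  · simp [signChanges]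
  · rw [signVariations, ← signChanges_eq_length_destutter, coeffList,
      withBotSucc_degree_eq_natDegree_add_one hP, List.map_reverse, signChanges_reverse]

theorem eventually_atTop_leadingCoeff_mul_eval_pos {P : ℝ[X]} (hP : P ≠ 0) :
    ∀ᶠ x in atTop, 0 < P.leadingCoeff * P.eval x := by
  have hlc : 0 < P.leadingCoeff * P.leadingCoeff := mul_self_pos.mpr (leadingCoeff_ne_zero.mpr hP)
  by_cases hdeg : 0 < P.degree
  · have h := tendsto_atTop_of_leadingCoeff_nonneg (C P.leadingCoeff * P)
      (by rwa [degree_C_mul (leadingCoeff_ne_zero.mpr hP)]) (by simp [hlc.le])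
    simpa using h.eventually_gt_atTop 0
  · have h0 : P.natDegree = 0 := natDegree_eq_zero_iff_degree_le_zero.mpr (not_lt.mp hdeg)
    filter_upwards with x
    rwa [eq_C_of_natDegree_eq_zero h0, eval_C, leadingCoeff_C, ← h0, coeff_natDegree]

theorem trailingCoeff_mul_leadingCoeff_pos {P : ℝ[X]} (hP : P ≠ 0)
    (h : ∀ x, 0 < x → ¬P.IsRoot x) : 0 < P.trailingCoeff * P.leadingCoeff := by
  obtain ⟨q, hq⟩ : X ^ P.natTrailingDegree ∣ P :=
    X_pow_dvd_iff.mpr fun d hd => coeff_eq_zero_of_lt_natTrailingDegree hd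
  have htc : P.trailingCoeff = q.eval 0 :=
    calc P.trailingCoeff = (X ^ P.natTrailingDegree * q).coeff P.natTrailingDegree :=
          by exact congr_arg (coeff · P.natTrailingDegree) hq
      _ = q.eval 0 := by simp [coeff_X_pow_mul', coeff_zero_eq_eval_zero]
  have hlc : P.leadingCoeff = q.leadingCoeff := by
    rw [hq, leadingCoeff_mul, leadingCoeff_X_pow, one_mul]
  have hq0 : q ≠ 0 := by rintro rfl; exact hP (by rw [hq, mul_zero])
  have hroots : ∀ x ∈ Set.Ici (0 : ℝ), q.eval x ≠ 0 := by
    intro x hx hqx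
    rcases (Set.mem_Ici.mp hx).eq_or_lt with rfl | hx
    · exact trailingCoeff_nonzero_iff_nonzero.mpr hP (htc.trans hqx)
    · exact h x hx (by rw [IsRoot, hq, eval_mul, hqx, mul_zero])
  obtain ⟨x, hx, hx0⟩ := ((eventually_atTop_leadingCoeff_mul_eval_pos hq0).and
    (eventually_ge_atTop 0)).exists
  have hsign := isPreconnected_Ici.mul_pos_of_forall_ne_zero q.continuous.continuousOn hroots
    Set.self_mem_Ici hx0
  rw [htc, hlc]
  nlinarith [mul_pos hsign hx, mul_self_pos.mpr (hroots x hx0)]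

theorem trailingCoeff_mul_leadingCoeff_X_sub_C_mul {R : Type*} [CommRing R] [NoZeroDivisors R]
    {r : R} (hr : r ≠ 0) (Q : R[X]) :
    ((X - C r) * Q).trailingCoeff * ((X - C r) * Q).leadingCoeff =
      -r * (Q.trailingCoeff * Q.leadingCoeff) := by
  have h0 : (X - C r).coeff 0 = -r := by simp
  rw [trailingCoeff_mul, leadingCoeff_mul, leadingCoeff_X_sub_C,
    trailingCoeff_eq_coeff_zero (by rw [h0]; exact neg_ne_zero.mpr hr), h0]
  ring

theorem even_countP_pos_roots_iff {P : ℝ[X]} (hP : P ≠ 0) :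
    Even (P.roots.countP (0 < ·)) ↔ 0 < P.trailingCoeff * P.leadingCoeff := by
  induction hn : P.roots.countP (0 < ·) generalizing P with
  | zero =>
    refine iff_of_true Even.zero (trailingCoeff_mul_leadingCoeff_pos hP fun x hx hroot => ?_)
    exact Multiset.countP_eq_zero.mp hn x ((mem_roots hP).mpr hroot) hx
  | succ n ih =>
    obtain ⟨r, hr, hr0⟩ := Multiset.countP_pos.mp (hn ▸ n.succ_pos :
      0 < P.roots.countP (0 < ·))
    obtain ⟨Q, rfl⟩ := dvd_iff_isRoot.mpr (isRoot_of_mem_roots hr)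
    have hQ : Q ≠ 0 := right_ne_zero_of_mul hP
    have hnQ : Q.roots.countP (0 < ·) = n := by
      simpa [roots_mul hP, hr0] using hn
    rw [Nat.even_add_one, ih hQ hnQ, trailingCoeff_mul_leadingCoeff_X_sub_C_mul hr0.ne']
    have := mul_ne_zero (trailingCoeff_nonzero_iff_nonzero.mpr hQ) (leadingCoeff_ne_zero.mpr hQ)
    rw [neg_mul, neg_pos, not_lt, this.le_iff_lt]
    exact ⟨mul_neg_of_pos_of_neg hr0, fun h => neg_of_mul_neg_right h hr0.le⟩

theorem even_signVariations_iff_even_countP_pos_roots (P : ℝ[X]) :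
    Even P.signVariations ↔ Even (P.roots.countP (0 < ·)) := by
  rcases eq_or_ne P 0 with rfl | hP
  · simp
  · rw [even_signVariations_iff hP, even_countP_pos_roots_iff hP]

end Polynomial

theorem descartes_rule_of_signs_general (a : Polynomial ℝ) :
    ∃ k : ℕ,
      signChanges ((List.range (a.natDegree + 1)).map a.coeff) =
        (a.roots.filter (fun x => 0 < x)).card + 2 * k := by
  rw [← signVariations_eq_signChanges, ← Multiset.countP_eq_card_filter]
  have hle := roots_countP_pos_le_signVariations a
  obtain ⟨k, hk⟩ := (Nat.even_sub hle).mpr (even_signVariations_iff_even_countP_pos_roots a)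
  exact ⟨k, by omega⟩

theorem descartes_rule_of_signs (a : Polynomial ℝ) (ha : a ≠ 0) :
    ∃ k : ℕ,
      signChanges ((List.range (a.natDegree + 1)).map a.coeff) =
        (a.roots.filter (fun x => 0 < x)).card + 2 * k :=
  descartes_rule_of_signs_general a
end
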